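/- Let X be a compact Hausdorff space, F a Banach lattice, and T : C(X) → F a disjointness preserving linear operator with nonempty finite singularity set {x₁,…,x_n}. Then there exist a continuous disjointness preserving operator R : C(X) → F and disjointness preserving operators S₁,…,S_n : C(X) → F with T = R + S₁ + … + S_n, where each S_i vanishes on J_{x_i} (the ideal of functions vanishing on a neighborhood of x_i) but does not vanish identically on M_{x_i} = {f : f(x_i) = 0}. -/

import Mathlib

/-!
Off `SingSet T` the operator is locally bounded, so a partition of unity bounds it on the
functions vanishing on a fixed neighbourhood of `SingSet T`. A gliding hump argument, which is
where disjointness preservation enters, makes this bound uniform over all functions vanishing on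
some neighbourhood of `SingSet T`. Subtracting an interpolant `∑ i, f (x i) • σ i` built from
bumps `σ i` (equal to `1` near `x i` and `0` near the other `x j`) then bounds `T` on the dense
subspace of functions that are constant near each `x i`; `R` is the continuous extension of `T`
from there, and `S i f = (T - R) (σ i * f)`. Both `R` and `T - R` preserve disjointness because
every `f` is a uniform limit of such locally constant functions vanishing wherever `f` does.
If `S i` vanished on `M_{x i}`, `T` would be bounded near `x i`.
-/

variable {X : Type*} [TopologicalSpace X] [CompactSpace X] [T2Space X]
  {F : Type*} [NormedAddCommGroup F] [Lattice F] [IsOrderedAddMonoid F] [HasSolidNorm F]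
  [NormedSpace ℝ F] [CompleteSpace F]

/-- The closed ideal of `C(X)` of functions vanishing off the open set `U`. -/
def KU (U : Set X) : Set C(X, ℝ) := {f : C(X, ℝ) | ∀ x ∉ U, f x = 0}

/-- The singularity set of `T`: the points `x` such that for every open neighborhood `U`
of `x`, the restriction of `T` to `K_U` is unbounded (discontinuous). -/
def SingSet (T : C(X, ℝ) →ₗ[ℝ] F) : Set X :=
  {x : X | ∀ U : Set X, IsOpen U → x ∈ U →
    ¬∃ C : ℝ, ∀ f ∈ KU U, ‖T f‖ ≤ C * ‖f‖}

open Filter Topology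

def IsDisjointnessPreserving {A E : Type*} [MulZeroClass A] [Lattice E] [AddGroup E]
    (T : A → E) : Prop :=
  ∀ f g, f * g = 0 → |T f| ⊓ |T g| = 0

theorem abs_le_abs_add_of_abs_inf_abs_eq_zero {E : Type*} [AddCommGroup E] [Lattice E]
    [IsOrderedAddMonoid E] {a b : E} (h : |a| ⊓ |b| = 0) : |b| ≤ |a + b| := by
  have hb : |b| = (|b| - |a|) ⊔ 0 := by
    have := inf_add_sup |a| |b|
    rw [h, zero_add] at this
    rw [← sub_self |a|, ← sup_sub, sup_comm, this, add_sub_cancel_left]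
  rw [hb, sup_le_iff, sub_le_iff_le_add]
  refine ⟨?_, abs_nonneg _⟩
  simpa using abs_add_le (a + b) (-a)

section SolidNorm

variable {E : Type*} [NormedAddCommGroup E] [Lattice E] [IsOrderedAddMonoid E] [HasSolidNorm E]

theorem norm_le_norm_add_of_abs_inf_abs_eq_zero {a b : E} (h : |a| ⊓ |b| = 0) :
    ‖b‖ ≤ ‖a + b‖ := by
  simpa only [norm_abs_eq_norm] using
    norm_le_norm_of_abs_le_abs (by simpa using abs_le_abs_add_of_abs_inf_abs_eq_zero h)

theorem abs_inf_abs_eq_zero_of_tendsto {ι : Type*} {l : Filter ι} [l.NeBot] {u v : ι → E}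
    {a b : E} (hu : Tendsto u l (𝓝 a)) (hv : Tendsto v l (𝓝 b))
    (h : ∀ k, |u k| ⊓ |v k| = 0) : |a| ⊓ |b| = 0 := by
  have hlim : Tendsto (fun k => |u k| ⊓ |v k|) l (𝓝 (|a| ⊓ |b|)) :=
    (hu.sup_nhds hu.neg).inf_nhds (hv.sup_nhds hv.neg)
  simp only [h] at hlim
  exact (tendsto_const_nhds_iff.1 hlim).symm

end SolidNorm

section GlidingHump

variable {A E : Type*} [NormedRing A] [NormedAlgebra ℝ A]
  [NormedAddCommGroup E] [Lattice E] [IsOrderedAddMonoid E] [HasSolidNorm E] [NormedSpace ℝ E]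
  {T : A →ₗ[ℝ] E}

theorem IsDisjointnessPreserving.norm_apply_le_norm_apply_tsum (hT : IsDisjointnessPreserving T)
    {h : ℕ → A} (hdisj : Pairwise fun k l => h k * h l = 0) (hs : Summable h) (k : ℕ) :
    ‖T (h k)‖ ≤ ‖T (∑' j, h j)‖ := by
  have hk : (∑' j, h j - h k) * h k = 0 := by
    rw [sub_mul, ← hs.tsum_mul_right, tsum_eq_single k fun j hj => hdisj hj, sub_self]
  simpa using norm_le_norm_add_of_abs_inf_abs_eq_zero (hT _ _ hk)

/-- Scaled by `2⁻¹ ^ k`, the humps sum to an element whose image dominates the image of each of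
them. -/
theorem IsDisjointnessPreserving.not_forall_pow_le_norm_apply [CompleteSpace A]
    (hT : IsDisjointnessPreserving T)
    {h : ℕ → A} (hdisj : Pairwise fun k l => h k * h l = 0) (hnorm : ∀ k, ‖h k‖ ≤ 1) :
    ¬ ∀ k, (4 : ℝ) ^ k ≤ ‖T (h k)‖ := by
  intro hlarge
  set s : ℕ → A := fun k => (2⁻¹ : ℝ) ^ k • h k
  have hs : Summable s := by
    refine Summable.of_norm_bounded
      (summable_geometric_of_lt_one (r := 2⁻¹) (by norm_num) (by norm_num)) fun k => ?_
    rw [norm_smul, norm_pow, norm_inv, Real.norm_two]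
    exact mul_le_of_le_one_right (by positivity) (hnorm k)
  have hsdisj : Pairwise fun k l => s k * s l = 0 := fun k l hkl => by
    simp only [s, smul_mul_smul_comm, hdisj hkl, smul_zero]
  have hTs (k : ℕ) : (2 : ℝ) ^ k ≤ ‖T (s k)‖ := by
    rw [map_smul, norm_smul, norm_pow, norm_inv, Real.norm_two]
    calc (2 : ℝ) ^ k = 2⁻¹ ^ k * 4 ^ k := by
          rw [← mul_pow]; norm_num
      _ ≤ 2⁻¹ ^ k * ‖T (h k)‖ := by gcongr; exact hlarge k
  obtain ⟨k, hk⟩ := pow_unbounded_of_one_lt ‖T (∑' j, s j)‖ one_lt_two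
  exact hk.not_ge ((hTs k).trans (hT.norm_apply_le_norm_apply_tsum hsdisj hs k))

end GlidingHump

theorem exists_norm_le_one_lt_norm_apply {G E : Type*} [NormedAddCommGroup G] [NormedSpace ℝ G]
    [NormedAddCommGroup E] [NormedSpace ℝ E] (T : G →ₗ[ℝ] E) {p : Submodule ℝ G}
    (h : ¬∃ C, 0 ≤ C ∧ ∀ g ∈ p, ‖T g‖ ≤ C * ‖g‖) (M : ℝ) :
    ∃ g ∈ p, ‖g‖ ≤ 1 ∧ M < ‖T g‖ := by
  push Not at h
  obtain ⟨g, hg, hlt⟩ := h (max M 0) (le_max_right _ _)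
  have hg0 : 0 < ‖g‖ := norm_pos_iff.2 fun h => by simp [h] at hlt
  refine ⟨‖g‖⁻¹ • g, p.smul_mem _ hg, ?_, ?_⟩
  · rw [norm_smul, norm_inv, norm_norm, inv_mul_cancel₀ hg0.ne']
  · rw [map_smul, norm_smul, norm_inv, norm_norm, lt_inv_mul_iff₀ hg0, mul_comm]
    exact lt_of_le_of_lt (by gcongr; exact le_max_left _ _) hlt

theorem exists_continuousLinearMap_eqOn_of_dense {G H : Type*} [NormedAddCommGroup G]
    [NormedSpace ℝ G] [NormedAddCommGroup H] [NormedSpace ℝ H] [CompleteSpace H]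
    (T : G →ₗ[ℝ] H) {p : Submodule ℝ G} (hp : Dense (p : Set G))
    (hT : ∃ C, ∀ g ∈ p, ‖T g‖ ≤ C * ‖g‖) : ∃ R : G →L[ℝ] H, ∀ g ∈ p, R g = T g := by
  obtain ⟨C, hC⟩ := hT
  exact ⟨(T ∘ₗ p.subtype).extendOfNorm p.subtype, fun g hg =>
    LinearMap.extendOfNorm_eq (f := T ∘ₗ p.subtype) (by simpa using hp.denseRange_val)
      ⟨C, fun g => hC g g.2⟩ ⟨g, hg⟩⟩

theorem IsDisjointnessPreserving.comp_mulLeft {A E : Type*} [CommRing A] [Algebra ℝ A]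
    [AddCommGroup E] [Lattice E] [Module ℝ E] {D : A →ₗ[ℝ] E} (hD : IsDisjointnessPreserving D)
    (σ : A) : IsDisjointnessPreserving (D ∘ₗ LinearMap.mulLeft ℝ σ) := fun f g hfg =>
  hD _ _ (by rw [LinearMap.mulLeft_apply, LinearMap.mulLeft_apply, mul_mul_mul_comm, hfg,
    mul_zero])

def locallyConstAt (S : Set X) : Submodule ℝ C(X, ℝ) where
  carrier := {f | ∀ z ∈ S, ∀ᶠ y in 𝓝 z, f y = f z}
  add_mem' hf hg z hz := ((hf z hz).and (hg z hz)).mono fun y hy => by simp [hy.1, hy.2]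
  zero_mem' _ _ := by simp
  smul_mem' c f hf z hz := (hf z hz).mono fun y hy => by simp [hy]

def vanishingNear (S : Set X) : Submodule ℝ C(X, ℝ) where
  carrier := {f | ∀ᶠ y in 𝓝ˢ S, f y = 0}
  add_mem' {f g} (hf : ∀ᶠ y in 𝓝ˢ S, f y = 0) (hg : ∀ᶠ y in 𝓝ˢ S, g y = 0) :=
    (hf.and hg).mono fun y hy => by simp [hy.1, hy.2]
  zero_mem' := by simp
  smul_mem' c f (hf : ∀ᶠ y in 𝓝ˢ S, f y = 0) := hf.mono fun y hy => by simp [hy]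

theorem exists_eventually_eq_one_zero {s t : Set X} (hs : IsClosed s) (ht : IsClosed t)
    (hst : Disjoint s t) : ∃ τ : C(X, ℝ), (∀ᶠ y in 𝓝ˢ s, τ y = 1) ∧ (∀ᶠ y in 𝓝ˢ t, τ y = 0) ∧
      ∀ y, τ y ∈ Set.Icc (0 : ℝ) 1 := by
  obtain ⟨U, hU, hsU, hUt⟩ := normal_exists_closure_subset hs ht.isOpen_compl
    (Set.subset_compl_iff_disjoint_right.2 hst)
  obtain ⟨V, hV, htV, hVU⟩ := normal_exists_closure_subset ht isClosed_closure.isOpen_compl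
    (Set.subset_compl_comm.1 hUt)
  obtain ⟨τ, hτ0, hτ1, hτI⟩ := exists_continuous_zero_one_of_isClosed isClosed_closure
    isClosed_closure (Set.subset_compl_iff_disjoint_right.1 hVU)
  exact ⟨τ, mem_of_superset (hU.mem_nhdsSet.2 hsU) fun y hy => hτ1 (subset_closure hy),
    mem_of_superset (hV.mem_nhdsSet.2 htV) fun y hy => hτ0 (subset_closure hy), hτI⟩

omit [T2Space X] in
theorem ContinuousMap.norm_le_one_of_forall_mem_Icc {τ : C(X, ℝ)}
    (h : ∀ y, τ y ∈ Set.Icc (0 : ℝ) 1) : ‖τ‖ ≤ 1 :=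
  (τ.norm_le zero_le_one).2 fun y => by
    rw [Real.norm_eq_abs, abs_le]; exact ⟨by linarith [(h y).1], (h y).2⟩

omit [CompactSpace X] [T2Space X] in
theorem ContinuousMap.mul_eq_zero_of_forall_eq_zero {f g u v : C(X, ℝ)} (hfg : f * g = 0)
    (hu : ∀ y, f y = 0 → u y = 0) (hv : ∀ y, g y = 0 → v y = 0) : u * v = 0 := by
  ext y
  rcases mul_eq_zero.1 (congrArg (· y) hfg) with h | h
  · simp [hu y h]
  · simp [hv y h]

omit [T2Space X] in
theorem norm_sum_eval_smul_le {ι V : Type*} [Fintype ι] [SeminormedAddCommGroup V]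
    [NormedSpace ℝ V] (f : C(X, ℝ)) (x : ι → X) (v : ι → V) :
    ‖∑ i, f (x i) • v i‖ ≤ (∑ i, ‖v i‖) * ‖f‖ := by
  rw [Finset.sum_mul]
  refine (norm_sum_le _ _).trans (Finset.sum_le_sum fun i _ => ?_)
  rw [norm_smul, mul_comm]
  gcongr
  exact f.norm_coe_le_norm _

theorem exists_locallyConstAt_approx {S : Set X} (hS : IsClosed S) {f α : C(X, ℝ)}
    (hα : α ∈ locallyConstAt S) (hαf : ∀ z ∈ S, α z = f z) {ε : ℝ} (hε : 0 < ε) :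
    ∃ f' ∈ locallyConstAt S, ‖f' - f‖ ≤ ε ∧ ∀ y, f y = 0 → f' y = 0 := by
  -- `f' = f + τ * (α - f)` with `τ = 1` near `S` and `τ = 0` off `N`; on `N`, `α` is `ε`-close
  -- to `f` and vanishes wherever `f` does.
  set N := {y | |f y - α y| < ε} ∩ ({y | f y ≠ 0} ∪ interior {y | α y = 0})
  have hNo : IsOpen N := (isOpen_lt (by fun_prop) continuous_const).inter
    ((isOpen_ne_fun f.continuous continuous_const).union isOpen_interior)
  have hSN : S ⊆ N := by
    intro z hz
    refine ⟨by simp [hαf z hz, hε], ?_⟩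
    by_cases hfz : f z = 0
    · right
      rw [mem_interior_iff_mem_nhds]
      filter_upwards [hα z hz] with y hy
      rw [hy, hαf z hz, hfz]
    · exact Or.inl hfz
  obtain ⟨τ, hτ1, hτ0, hτI⟩ := exists_eventually_eq_one_zero hS hNo.isClosed_compl
    (Set.disjoint_compl_right_iff_subset.2 hSN)
  have hτN (y : X) (hy : τ y ≠ 0) : y ∈ N := by
    by_contra h
    exact hy (hτ0.self_of_nhdsSet y h)
  refine ⟨f + τ * (α - f), fun z hz => ?_, ?_, fun y hy => ?_⟩
  · filter_upwards [hτ1.filter_mono (nhds_le_nhdsSet hz), hα z hz] with y hτy hαy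
    simp [hτy, hαy, hτ1.self_of_nhdsSet z hz]
  · refine ((f + τ * (α - f) - f).norm_le hε.le).2 fun y => ?_
    simp only [add_sub_cancel_left, ContinuousMap.mul_apply, ContinuousMap.sub_apply, norm_mul,
      Real.norm_eq_abs]
    by_cases hy : τ y = 0
    · simp [hy, hε.le]
    · rw [abs_sub_comm]
      exact (mul_le_mul (abs_le.2 ⟨by linarith [(hτI y).1], (hτI y).2⟩) (hτN y hy).1.le
        (abs_nonneg _) zero_le_one).trans_eq (one_mul ε)
  · by_cases hτy : τ y = 0
    · simp [hy, hτy]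
    · have hαy : α y = 0 := by
        rcases (hτN y hτy).2 with h | h
        · exact absurd hy h
        · exact interior_subset (s := {y | α y = 0}) h
      simp [hy, hαy]

section Regularity

variable {E : Type*} [NormedAddCommGroup E] [NormedSpace ℝ E]

omit [T2Space X] in
theorem isClosed_singSet (T : C(X, ℝ) →ₗ[ℝ] E) : IsClosed (SingSet T) := by
  refine isOpen_compl_iff.1 (isOpen_iff_forall_mem_open.2 fun z hz => ?_)
  simp only [SingSet, Set.mem_compl_iff, Set.mem_ofPred_eq, not_forall, not_not] at hz
  obtain ⟨U, hU, hzU, hbound⟩ := hz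
  exact ⟨U, fun y hy hsing => hsing U hU hy hbound, hU, hzU⟩

/-- A partition of unity subordinate to finitely many regular neighbourhoods covering the
compact set `(interior Q)ᶜ` splits `f` into pieces on which `T` is bounded. -/
theorem exists_bound_of_eq_zero_on_nhdsSet (T : C(X, ℝ) →ₗ[ℝ] E) {Q : Set X}
    (hQ : Q ∈ 𝓝ˢ (SingSet T)) :
    ∃ C, 0 ≤ C ∧ ∀ f : C(X, ℝ), (∀ y ∈ Q, f y = 0) → ‖T f‖ ≤ C * ‖f‖ := by
  set s := (interior Q)ᶜ
  have hs : IsCompact s := isOpen_interior.isClosed_compl.isCompact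
  have hreg : ∀ y ∈ s, ∃ U, IsOpen U ∧ y ∈ U ∧ ∃ C, ∀ f ∈ KU U, ‖T f‖ ≤ C * ‖f‖ := by
    intro y hy
    have hy : y ∉ SingSet T := fun h => hy (subset_interior_iff_mem_nhdsSet.2 hQ h)
    simpa [SingSet] using hy
  choose! U hUo hyU C hC using hreg
  obtain ⟨t, ht⟩ := hs.elim_finite_subcover (fun y : s => U y) (fun y => hUo y y.2)
    fun y hy => Set.mem_iUnion.2 ⟨⟨y, hy⟩, hyU y hy⟩
  obtain ⟨ρ, hρ⟩ := PartitionOfUnity.exists_isSubordinate hs.isClosed (fun i : t => U i.1)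
    (fun i => hUo _ i.1.2) fun y hy => by simpa using ht hy
  refine ⟨∑ i : t, max (C i) 0 * ‖ρ i‖, by positivity, fun f hf => ?_⟩
  have hsplit : f = ∑ i : t, ρ i * f := by
    ext y
    simp only [ContinuousMap.sum_apply, ContinuousMap.mul_apply, ← Finset.sum_mul]
    by_cases hy : y ∈ s
    · rw [← finsum_eq_sum_of_fintype, ρ.sum_eq_one hy, one_mul]
    · rw [hf y (interior_subset (not_not.1 hy)), mul_zero]
  have hpiece (i : t) : ‖T (ρ i * f)‖ ≤ max (C i) 0 * ‖ρ i‖ * ‖f‖ := by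
    have hK : ρ i * f ∈ KU (U i) := fun y hy => by
      simp [image_eq_zero_of_notMem_tsupport fun h => hy (hρ i h)]
    calc ‖T (ρ i * f)‖ ≤ max (C i) 0 * ‖ρ i * f‖ :=
          (hC _ i.1.2 _ hK).trans (by gcongr; exact le_max_left _ _)
      _ ≤ max (C i) 0 * ‖ρ i‖ * ‖f‖ := by
          rw [mul_assoc]; gcongr; exact norm_mul_le _ _
  calc ‖T f‖ = ‖∑ i : t, T (ρ i * f)‖ := by rw [← map_sum, ← hsplit]
    _ ≤ ∑ i : t, max (C i) 0 * ‖ρ i‖ * ‖f‖ :=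
        (norm_sum_le _ _).trans (Finset.sum_le_sum fun i _ => hpiece i)
    _ = (∑ i : t, max (C i) 0 * ‖ρ i‖) * ‖f‖ := by rw [Finset.sum_mul]

theorem exists_large_hump_in_nhdsSet (T : C(X, ℝ) →ₗ[ℝ] E)
    (hunb : ∀ M : ℝ, ∃ g ∈ vanishingNear (SingSet T), ‖g‖ ≤ 1 ∧ M < ‖T g‖) (M : ℝ) {N : Set X}
    (hN : N ∈ 𝓝ˢ (SingSet T)) :
    ∃ h ∈ vanishingNear (SingSet T), (∀ y ∉ N, h y = 0) ∧ ‖h‖ ≤ 1 ∧ M ≤ ‖T h‖ := by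
  obtain ⟨τ, hτ1, hτ0, hτI⟩ := exists_eventually_eq_one_zero (isClosed_singSet T)
    isOpen_interior.isClosed_compl
    (Set.disjoint_compl_right_iff_subset.2 (subset_interior_iff_mem_nhdsSet.2 hN))
  obtain ⟨C, hC0, hC⟩ := exists_bound_of_eq_zero_on_nhdsSet T hτ1
  obtain ⟨g, hg : ∀ᶠ y in 𝓝ˢ (SingSet T), g y = 0, hg1, hgM⟩ := hunb (M + C)
  have hτ : ‖τ‖ ≤ 1 := τ.norm_le_one_of_forall_mem_Icc hτI
  have hτ' : ‖1 - τ‖ ≤ 1 := ContinuousMap.norm_le_one_of_forall_mem_Icc fun y => by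
    simp only [ContinuousMap.sub_apply, ContinuousMap.one_apply, Set.mem_Icc, sub_nonneg,
      sub_le_self_iff]
    exact ⟨(hτI y).2, (hτI y).1⟩
  have hrest : ‖T ((1 - τ) * g)‖ ≤ C := by
    refine (hC _ fun y (hy : τ y = 1) => by simp [hy]).trans ?_
    calc C * ‖(1 - τ) * g‖ ≤ C * (‖1 - τ‖ * ‖g‖) := by gcongr; exact norm_mul_le _ _
      _ ≤ C * (1 * 1) := by gcongr
      _ = C := by ring
  refine ⟨τ * g, hg.mono fun y hy => by simp [hy], fun y hy => ?_, ?_, ?_⟩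
  · simp [hτ0.self_of_nhdsSet y fun h => hy (interior_subset h)]
  · exact (norm_mul_le _ _).trans (by nlinarith [norm_nonneg τ, norm_nonneg g])
  · have hsplit : T g = T (τ * g) + T ((1 - τ) * g) := by rw [← map_add, ← add_mul]; simp
    rw [hsplit] at hgM
    linarith [norm_add_le (T (τ * g)) (T ((1 - τ) * g))]

omit [T2Space X] in
/-- If the singular part `(T - R) (σ * ·)` at `z` vanished on `M_z`, then on functions supported
where `σ = 1` we would have `T f = R (σ * f) + f z • (T - R) σ`, a bounded expression. -/
theorem notMem_singSet_of_forall_eq_zero {T : C(X, ℝ) →ₗ[ℝ] E} (R : C(X, ℝ) →L[ℝ] E)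
    {σ : C(X, ℝ)} {z : X}
    (hσ : ∀ᶠ y in 𝓝 z, σ y = 1) (h : ∀ f : C(X, ℝ), f z = 0 → (T - R.toLinearMap) (σ * f) = 0) :
    z ∉ SingSet T := by
  obtain ⟨U, hUσ, hU, hzU⟩ := eventually_nhds_iff.1 hσ
  refine fun hsing => hsing U hU hzU ⟨‖R‖ * ‖σ‖ + ‖(T - R.toLinearMap) σ‖, fun f hf => ?_⟩
  have hσf : σ * f = f := by
    ext y
    by_cases hy : y ∈ U
    · simp [hUσ y hy]
    · simp [hf y hy]
  have hD : (T - R.toLinearMap) (σ * f) = f z • (T - R.toLinearMap) σ := by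
    have := h (f - f z • 1) (by simp)
    rwa [mul_sub, map_sub, sub_eq_zero, mul_smul_comm, mul_one, map_smul] at this
  calc ‖T f‖ = ‖R (σ * f) + f z • (T - R.toLinearMap) σ‖ := by
        rw [← hD, hσf]; simp
    _ ≤ ‖R‖ * (‖σ‖ * ‖f‖) + ‖f‖ * ‖(T - R.toLinearMap) σ‖ := by
        refine (norm_add_le _ _).trans (add_le_add ((R.le_opNorm _).trans ?_) ?_)
        · gcongr; exact norm_mul_le _ _
        · rw [norm_smul]; gcongr; exact f.norm_coe_le_norm z
    _ = (‖R‖ * ‖σ‖ + ‖(T - R.toLinearMap) σ‖) * ‖f‖ := by ring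

end Regularity

section DisjointnessPreserving

variable {E : Type*} [NormedAddCommGroup E] [Lattice E] [IsOrderedAddMonoid E] [HasSolidNorm E]
  [NormedSpace ℝ E] {T : C(X, ℝ) →ₗ[ℝ] E} {p : Submodule ℝ C(X, ℝ)} {R : C(X, ℝ) →L[ℝ] E}

/-- Otherwise humps supported in shrinking neighbourhoods of `SingSet T`, each vanishing near
the support of all later ones, would contradict `not_forall_pow_le_norm_apply`. -/
theorem IsDisjointnessPreserving.exists_bound_vanishingNear_singSet
    (hT : IsDisjointnessPreserving T) :
    ∃ C, 0 ≤ C ∧ ∀ g ∈ vanishingNear (SingSet T), ‖T g‖ ≤ C * ‖g‖ := by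
  by_contra hunb
  choose! H hHJ hHN hH1 hHM using fun (M : ℝ) (N : Set X) (hN : N ∈ 𝓝ˢ (SingSet T)) =>
    exists_large_hump_in_nhdsSet T (exists_norm_le_one_lt_norm_apply T hunb) M hN
  let N : ℕ → Set X := fun k =>
    Nat.rec (motive := fun _ => Set X) Set.univ (fun k Nk => Nk ∩ {y | H (4 ^ k) Nk y = 0}) k
  have hN (k : ℕ) : N k ∈ 𝓝ˢ (SingSet T) := by
    induction k with
    | zero => exact univ_mem
    | succ k ih => exact inter_mem ih (hHJ _ _ ih)
  have hanti : Antitone N := antitone_nat_of_succ_le fun k => Set.inter_subset_left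
  have hlt (k l : ℕ) (hkl : k < l) (y : X) : H (4 ^ k) (N k) y * H (4 ^ l) (N l) y = 0 := by
    by_cases hy : y ∈ N (k + 1)
    · rw [hy.2, zero_mul]
    · rw [hHN _ _ (hN l) y fun h => hy (hanti hkl h), mul_zero]
  refine hT.not_forall_pow_le_norm_apply (h := fun k => H (4 ^ k) (N k)) (fun k l hkl => ?_)
    (fun k => hH1 _ _ (hN k)) fun k => hHM _ _ (hN k)
  ext y
  rcases hkl.lt_or_gt with h | h
  · simpa using hlt k l h y
  · simpa [mul_comm] using hlt l k h y

omit [CompactSpace X] [T2Space X] in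
theorem IsDisjointnessPreserving.extension (hT : IsDisjointnessPreserving T)
    (happrox : ∀ f, ∃ u : ℕ → C(X, ℝ), (∀ k, u k ∈ p) ∧ Tendsto u atTop (𝓝 f) ∧
      ∀ k y, f y = 0 → u k y = 0)
    (hR : ∀ g ∈ p, R g = T g) : IsDisjointnessPreserving R := by
  intro f g hfg
  obtain ⟨u, hup, hu, hu0⟩ := happrox f
  obtain ⟨v, hvp, hv, hv0⟩ := happrox g
  refine abs_inf_abs_eq_zero_of_tendsto ((R.continuous.tendsto f).comp hu)
    ((R.continuous.tendsto g).comp hv) fun k => ?_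
  simp only [Function.comp_apply, hR _ (hup k), hR _ (hvp k)]
  exact hT _ _ (ContinuousMap.mul_eq_zero_of_forall_eq_zero hfg (hu0 k) (hv0 k))

omit [CompactSpace X] [T2Space X] in
/-- `(T - R) f` is the limit of `T (f - u k)`, and `f - u k` vanishes wherever `f` does. -/
theorem IsDisjointnessPreserving.sub_extension (hT : IsDisjointnessPreserving T)
    (happrox : ∀ f, ∃ u : ℕ → C(X, ℝ), (∀ k, u k ∈ p) ∧ Tendsto u atTop (𝓝 f) ∧
      ∀ k y, f y = 0 → u k y = 0)
    (hR : ∀ g ∈ p, R g = T g) : IsDisjointnessPreserving (T - R.toLinearMap) := by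
  have hlim {f : C(X, ℝ)} {u : ℕ → C(X, ℝ)} (hup : ∀ k, u k ∈ p) (hu : Tendsto u atTop (𝓝 f)) :
      Tendsto (fun k => T (f - u k)) atTop (𝓝 ((T - R.toLinearMap) f)) := by
    simpa [hR _ (hup _)] using tendsto_const_nhds.sub ((R.continuous.tendsto f).comp hu)
  intro f g hfg
  obtain ⟨u, hup, hu, hu0⟩ := happrox f
  obtain ⟨v, hvp, hv, hv0⟩ := happrox g
  refine abs_inf_abs_eq_zero_of_tendsto (hlim hup hu) (hlim hvp hv) fun k => hT _ _ ?_
  exact ContinuousMap.mul_eq_zero_of_forall_eq_zero hfg (fun y hy => by simp [hy, hu0 k y hy])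
    fun y hy => by simp [hy, hv0 k y hy]

end DisjointnessPreserving

section FiniteSet

variable {ι : Type*} [Fintype ι] [DecidableEq ι] {x : ι → X} {σ : ι → C(X, ℝ)}

theorem exists_bump_family (hx : Function.Injective x) :
    ∃ σ : ι → C(X, ℝ), ∀ i j, ∀ᶠ y in 𝓝 (x j), σ i y = if i = j then 1 else 0 := by
  have (i : ι) : ∃ σ : C(X, ℝ), (∀ᶠ y in 𝓝 (x i), σ y = 1) ∧
      ∀ j ≠ i, ∀ᶠ y in 𝓝 (x j), σ y = 0 := by
    obtain ⟨σ, h1, h0, -⟩ := exists_eventually_eq_one_zero (s := {x i}) (t := x '' {i}ᶜ)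
      isClosed_singleton (Set.toFinite _).isClosed (by simp [hx.mem_set_image])
    exact ⟨σ, by rwa [nhdsSet_singleton] at h1,
      fun j hj => h0.filter_mono (nhds_le_nhdsSet (Set.mem_image_of_mem x hj))⟩
  choose σ h1 h0 using this
  refine ⟨σ, fun i j => ?_⟩
  split_ifs with h
  · exact h ▸ h1 i
  · exact h0 i j (Ne.symm h)

omit [CompactSpace X] [T2Space X] in
theorem eventually_sum_smul_eq
    (hσ : ∀ i j, ∀ᶠ y in 𝓝 (x j), σ i y = if i = j then 1 else 0) (c : ι → ℝ) (j : ι) :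
    ∀ᶠ y in 𝓝 (x j), (∑ i, c i • σ i) y = c j := by
  filter_upwards [eventually_all.2 fun i => hσ i j] with y hy
  simp [hy]

theorem exists_seq_locallyConstAt_tendsto
    (hσ : ∀ i j, ∀ᶠ y in 𝓝 (x j), σ i y = if i = j then 1 else 0) (f : C(X, ℝ)) :
    ∃ u : ℕ → C(X, ℝ), (∀ k, u k ∈ locallyConstAt (Set.range x)) ∧ Tendsto u atTop (𝓝 f) ∧
      ∀ k y, f y = 0 → u k y = 0 := by
  have hα := eventually_sum_smul_eq hσ (fun i => f (x i))
  choose u hu hdist hzero using fun k : ℕ => exists_locallyConstAt_approx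
    (Set.finite_range x).isClosed (α := ∑ i, f (x i) • σ i)
    (by rintro _ ⟨j, rfl⟩; simpa [(hα j).self_of_nhds] using hα j)
    (by rintro _ ⟨j, rfl⟩; exact (hα j).self_of_nhds) (Nat.one_div_pos_of_nat (n := k))
  refine ⟨u, hu, ?_, hzero⟩
  rw [tendsto_iff_norm_sub_tendsto_zero]
  exact squeeze_zero (fun _ => norm_nonneg _) hdist tendsto_one_div_add_atTop_nhds_zero_nat

theorem IsDisjointnessPreserving.exists_bound_locallyConstAt {E : Type*} [NormedAddCommGroup E]
    [Lattice E] [IsOrderedAddMonoid E] [HasSolidNorm E] [NormedSpace ℝ E]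
    {T : C(X, ℝ) →ₗ[ℝ] E} (hT : IsDisjointnessPreserving T) (hsing : SingSet T = Set.range x)
    (hσ : ∀ i j, ∀ᶠ y in 𝓝 (x j), σ i y = if i = j then 1 else 0) :
    ∃ C, ∀ f ∈ locallyConstAt (Set.range x), ‖T f‖ ≤ C * ‖f‖ := by
  obtain ⟨C, hC0, hC⟩ := hT.exists_bound_vanishingNear_singSet
  refine ⟨C * (1 + ∑ i, ‖σ i‖) + ∑ i, ‖T (σ i)‖, fun f hf => ?_⟩
  set α := ∑ i, f (x i) • σ i
  have hJ : f - α ∈ vanishingNear (SingSet T) := by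
    change ∀ᶠ y in 𝓝ˢ (SingSet T), (f - α) y = 0
    rw [hsing, eventually_nhdsSet_iff_forall]
    rintro _ ⟨j, rfl⟩
    filter_upwards [hf _ ⟨j, rfl⟩, eventually_sum_smul_eq hσ (fun i => f (x i)) j] with y h1 h2
    simp [α, h1, h2]
  have hTα : T α = ∑ i, f (x i) • T (σ i) := by simp [α, map_sum]
  calc ‖T f‖ = ‖T (f - α) + T α‖ := by rw [← map_add, sub_add_cancel]
    _ ≤ C * (‖f‖ + (∑ i, ‖σ i‖) * ‖f‖) + (∑ i, ‖T (σ i)‖) * ‖f‖ := by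
        refine (norm_add_le _ _).trans (add_le_add ((hC _ hJ).trans ?_) ?_)
        · exact mul_le_mul_of_nonneg_left
            ((norm_sub_le _ _).trans (by gcongr; exact norm_sum_eval_smul_le f x σ)) hC0
        · rw [hTα]; exact norm_sum_eval_smul_le f x _
    _ = (C * (1 + ∑ i, ‖σ i‖) + ∑ i, ‖T (σ i)‖) * ‖f‖ := by ring

omit [CompactSpace X] [T2Space X] in
theorem sum_comp_mulLeft_eq {E : Type*} [NormedAddCommGroup E] [NormedSpace ℝ E]
    {D : C(X, ℝ) →ₗ[ℝ] E} (hD : ∀ g ∈ locallyConstAt (Set.range x), D g = 0)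
    (hσ : ∀ i j, ∀ᶠ y in 𝓝 (x j), σ i y = if i = j then 1 else 0) :
    ∑ i, D ∘ₗ LinearMap.mulLeft ℝ (σ i) = D := by
  ext f
  have hsum (j : ι) : ∀ᶠ y in 𝓝 (x j), ∑ i, σ i y = 1 := by
    filter_upwards [eventually_all.2 fun i => hσ i j] with y hy
    simp [hy]
  have hΛ : f - ∑ i, σ i * f ∈ locallyConstAt (Set.range x) := by
    rintro _ ⟨j, rfl⟩
    filter_upwards [hsum j] with y hy
    simp [← Finset.sum_mul, hy, (hsum j).self_of_nhds]
  have h := hD _ hΛ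
  rw [map_sub, map_sum, sub_eq_zero] at h
  simpa using h.symm

omit [CompactSpace X] [T2Space X] [Fintype ι] in
theorem comp_mulLeft_apply_eq_zero {E : Type*} [NormedAddCommGroup E] [NormedSpace ℝ E]
    {D : C(X, ℝ) →ₗ[ℝ] E} (hD : ∀ g ∈ locallyConstAt (Set.range x), D g = 0)
    (hσ : ∀ i j, ∀ᶠ y in 𝓝 (x j), σ i y = if i = j then 1 else 0) {i : ι} {f : C(X, ℝ)}
    (hf : ∀ᶠ y in 𝓝 (x i), f y = 0) : D (σ i * f) = 0 := by
  refine hD _ ?_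
  rintro _ ⟨j, rfl⟩
  by_cases hij : i = j
  · subst hij
    filter_upwards [hf] with y hy
    simp [hy, hf.self_of_nhds]
  · filter_upwards [hσ i j] with y hy
    simp [hy, (hσ i j).self_of_nhds, hij]

end FiniteSet

theorem bade_curtis_structure_general (T : C(X, ℝ) →ₗ[ℝ] F)
    (hdp : ∀ f g : C(X, ℝ), f * g = 0 → |T f| ⊓ |T g| = 0)
    (n : ℕ) (x : Fin n → X) (hinj : Function.Injective x)
    (hsing : SingSet T = Set.range x) :
    ∃ (R : C(X, ℝ) →ₗ[ℝ] F) (S : Fin n → (C(X, ℝ) →ₗ[ℝ] F)),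
      Continuous R ∧
      (∀ f g : C(X, ℝ), f * g = 0 → |R f| ⊓ |R g| = 0) ∧
      (∀ i, ∀ f g : C(X, ℝ), f * g = 0 → |S i f| ⊓ |S i g| = 0) ∧
      T = R + ∑ i, S i ∧
      (∀ i, ∀ f : C(X, ℝ),
        (∃ U : Set X, IsOpen U ∧ x i ∈ U ∧ ∀ y ∈ U, f y = 0) → S i f = 0) ∧
      (∀ i, ∃ f : C(X, ℝ), f (x i) = 0 ∧ S i f ≠ 0) := by
  obtain ⟨σ, hσ⟩ := exists_bump_family hinj
  have happrox := exists_seq_locallyConstAt_tendsto hσ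
  have hdense : Dense (locallyConstAt (Set.range x) : Set C(X, ℝ)) := fun f =>
    let ⟨_, hu, hlim, _⟩ := happrox f
    mem_closure_of_tendsto hlim (.of_forall hu)
  obtain ⟨R, hR⟩ := exists_continuousLinearMap_eqOn_of_dense T hdense
    (IsDisjointnessPreserving.exists_bound_locallyConstAt hdp hsing hσ)
  have hD : ∀ g ∈ locallyConstAt (Set.range x), (T - R.toLinearMap) g = 0 := fun g hg => by
    simp [hR g hg]
  refine ⟨R, fun i => (T - R.toLinearMap) ∘ₗ LinearMap.mulLeft ℝ (σ i), R.continuous,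
    IsDisjointnessPreserving.extension hdp happrox hR,
    fun i => (IsDisjointnessPreserving.sub_extension hdp happrox hR).comp_mulLeft (σ i), ?_,
    fun i f ⟨U, hU, hxU, hfU⟩ =>
      comp_mulLeft_apply_eq_zero hD hσ (eventually_of_mem (hU.mem_nhds hxU) hfU),
    fun i => ?_⟩
  · rw [sum_comp_mulLeft_eq hD hσ]
    abel
  · by_contra! h
    exact notMem_singSet_of_forall_eq_zero R (by simpa using hσ i i) h
      (hsing ▸ Set.mem_range_self i)

/-- Bade–Curtis type structure theorem: if the singularity set of the disjointness
preserving operator `T` is the nonempty finite set `{x 1, …, x n}`, then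
`T = R + S₁ + ⋯ + Sₙ` with `R` continuous disjointness preserving and each `Sᵢ`
disjointness preserving, vanishing on `J_{x i}` but not identically on `M_{x i}`. -/
theorem bade_curtis_structure (T : C(X, ℝ) →ₗ[ℝ] F)
    (hdp : ∀ f g : C(X, ℝ), f * g = 0 → |T f| ⊓ |T g| = 0)
    (n : ℕ) (hn : 0 < n) (x : Fin n → X) (hinj : Function.Injective x)
    (hsing : SingSet T = Set.range x) :
    ∃ (R : C(X, ℝ) →ₗ[ℝ] F) (S : Fin n → (C(X, ℝ) →ₗ[ℝ] F)),
      Continuous R ∧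
      (∀ f g : C(X, ℝ), f * g = 0 → |R f| ⊓ |R g| = 0) ∧
      (∀ i, ∀ f g : C(X, ℝ), f * g = 0 → |S i f| ⊓ |S i g| = 0) ∧
      T = R + ∑ i, S i ∧
      (∀ i, ∀ f : C(X, ℝ),
        (∃ U : Set X, IsOpen U ∧ x i ∈ U ∧ ∀ y ∈ U, f y = 0) → S i f = 0) ∧
      (∀ i, ∃ f : C(X, ℝ), f (x i) = 0 ∧ S i f ≠ 0) :=
  bade_curtis_structure_general T hdp n x hinj hsing
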